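/- A group G satisfies: for each 2-coloring of G there is an infinite almost-monochromatic subsemigroup of G, if and only if G contains a subgroup isomorphic to ⊕_n ℤ/2. -/

import Mathlib

/-!
If `⊕ ℤ/2` embeds in `G`, pull a colouring back to it. By Hindman's theorem some FP-set `FP b`
inside the FP-set of the standard basis is monochromatic, and in an elementary abelian 2-group
`FP b ∪ {1}` is closed under multiplication (the product over `A` times the product over `B` is the
product over `A ∆ B`); it is infinite and monochromatic except possibly at `1`.

Conversely, colour `G` as follows. An element `g` of infinite order has nonzero powers
`g ^ a = r ^ b` in common with a chosen representative `r` of its commensurability class; colour it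
by the parity of the 2-adic valuation of `b / a`, which flips under squaring, so a subsemigroup
containing `g` contains infinitely many elements of either colour. A torsion element `g ≠ g⁻¹`
gets a colour different from `g⁻¹` (compare them in a well-order). An infinite almost monochromatic
subsemigroup is then torsion, hence a subgroup, with only finitely many non-involutions; so it is
an infinite elementary abelian 2-group, i.e. an infinite `𝔽₂`-vector space, and contains `⊕ ℤ/2`.
-/

open Function Hindman

section Hindman

theorem Hindman.injective_get_of_one_notMem_FP {M : Type*} [Monoid M]
    (hM : ∀ x : M, x * x = 1) {a : Stream' M} (ha : 1 ∉ FP a) : Injective a.get := by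
  intro i j hij
  by_contra hne
  rcases Nat.lt_or_gt_of_ne hne with h | h
  · exact ha (by simpa [hij, hM] using FP.mul_two a i j h)
  · exact ha (by simpa [hij, hM] using FP.mul_two a j i h)

variable {M : Type*} [CommMonoid M]

theorem Hindman.FP.exists_finset_prod_eq {a : Stream' M} {x : M} (hx : x ∈ FP a) :
    ∃ A : Finset ℕ, A.Nonempty ∧ ∏ i ∈ A, a.get i = x := by
  induction hx with
  | head' a => exact ⟨{0}, Finset.singleton_nonempty 0, by simp⟩
  | tail' a x _ ih =>
    obtain ⟨A, hA, rfl⟩ := ih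
    refine ⟨A.map (addRightEmbedding 1), hA.map, ?_⟩
    simp [Stream'.get_tail]
  | cons' a x _ ih =>
    obtain ⟨A, hA, rfl⟩ := ih
    refine ⟨Finset.cons 0 (A.map (addRightEmbedding 1)) (by simp), Finset.cons_nonempty _, ?_⟩
    simp [Stream'.get_tail]

theorem Finset.prod_mul_prod_eq_prod_symmDiff {ι : Type*} [DecidableEq ι]
    (hM : ∀ x : M, x * x = 1) (f : ι → M) (A B : Finset ι) :
    (∏ i ∈ A, f i) * ∏ i ∈ B, f i = ∏ i ∈ symmDiff A B, f i := by
  have hdisj : Disjoint (symmDiff A B) (A ∩ B) := disjoint_symmDiff_inf A B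
  rw [← Finset.prod_union_inter, ← Finset.sup_eq_union, ← symmDiff_sup_inf,
    Finset.sup_eq_union, Finset.inf_eq_inter, Finset.prod_union hdisj, mul_assoc,
    ← Finset.prod_mul_distrib, Finset.prod_eq_one fun i _ => hM (f i), mul_one]

def Hindman.FPSubmonoid (hM : ∀ x : M, x * x = 1) (a : Stream' M) : Submonoid M where
  carrier := insert 1 (FP a)
  one_mem' := Set.mem_insert 1 _
  mul_mem' := by
    classical
    rintro _ _ (rfl | hx) (rfl | hy)
    · simp
    · simpa using Or.inr hy
    · simpa using Or.inr hx
    obtain ⟨A, -, rfl⟩ := FP.exists_finset_prod_eq hx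
    obtain ⟨B, -, rfl⟩ := FP.exists_finset_prod_eq hy
    rw [Finset.prod_mul_prod_eq_prod_symmDiff hM]
    obtain h | h := (symmDiff A B).eq_empty_or_nonempty
    · simp [h]
    · exact Or.inr (FP.finsetProd a _ h)

theorem Hindman.exists_infinite_submonoid_forall_ne_one_eq (hM : ∀ x : M, x * x = 1)
    {a : Stream' M} (ha : 1 ∉ FP a) {κ : Type*} [Finite κ] (c : M → κ) :
    ∃ T : Submonoid M, (T : Set M).Infinite ∧ ∃ k, ∀ x ∈ T, x ≠ 1 → c x = k := by
  obtain ⟨_, ⟨k, rfl⟩, b, hb⟩ := FP_partition_regular a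
    (Set.range fun k => FP a ∩ c ⁻¹' {k}) (Set.finite_range _)
    fun x hx => Set.mem_sUnion.2 ⟨_, ⟨c x, rfl⟩, hx, rfl⟩
  have hb1 : 1 ∉ FP b := fun h => ha (hb h).1
  refine ⟨FPSubmonoid hM b, ?_, k, ?_⟩
  · refine (Set.infinite_range_of_injective (injective_get_of_one_notMem_FP hM hb1)).mono ?_
    rintro _ ⟨i, rfl⟩
    exact Or.inr (FP.singleton b i)
  · rintro x (rfl | hx) hx1
    · exact absurd rfl hx1
    · exact (hb hx).2

end Hindman

noncomputable def DirectSum.zmodTwoBasis :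
    Stream' (Multiplicative (DirectSum ℕ fun _ => ZMod 2)) :=
  fun n => .ofAdd (DirectSum.of _ n 1)

theorem DirectSum.mul_self_eq_one (x : Multiplicative (DirectSum ℕ fun _ => ZMod 2)) :
    x * x = 1 := by
  show x.toAdd + x.toAdd = 0
  ext i
  simp [CharTwo.add_self_eq_zero]

theorem DirectSum.one_notMem_FP_zmodTwoBasis : 1 ∉ FP zmodTwoBasis := by
  classical
  intro h
  obtain ⟨A, ⟨i, hi⟩, hA⟩ := FP.exists_finset_prod_eq h
  have : (∑ j ∈ A, DirectSum.of (fun _ => ZMod 2) j 1) i = 1 := by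
    rw [DFinsupp.finsetSum_apply,
      Finset.sum_eq_single i (fun j _ hji => of_eq_of_ne j i _ hji.symm) (absurd hi), of_eq_same]
  exact one_ne_zero (this.symm.trans (congrArg (fun x => x.toAdd i) hA))

theorem exists_infinite_almostMono_subsemigroup_of_injective {G : Type*} [Group G]
    {f : Multiplicative (DirectSum ℕ fun _ => ZMod 2) →* G} (hf : Injective f)
    {κ : Type*} [Finite κ] (c : G → κ) :
    ∃ T : Subsemigroup G, Infinite T ∧ ∃ k, {x ∈ (T : Set G) | c x ≠ k}.Finite := by
  obtain ⟨T, hT, k, hk⟩ := exists_infinite_submonoid_forall_ne_one_eq DirectSum.mul_self_eq_one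
    DirectSum.one_notMem_FP_zmodTwoBasis (c ∘ f)
  refine ⟨(T.map f).toSubsemigroup, (hT.image hf.injOn).to_subtype, k,
    (Set.finite_singleton 1).subset ?_⟩
  rintro _ ⟨⟨x, hx, rfl⟩, hcx⟩
  by_contra h
  exact hcx (hk x hx fun hx1 => h (by simp [hx1]))

namespace Subsemigroup

theorem pow_mem {M : Type*} [Monoid M] (T : Subsemigroup M) {x : M} (hx : x ∈ T) {n : ℕ}
    (hn : n ≠ 0) : x ^ n ∈ T := by
  induction n with
  | zero => exact absurd rfl hn
  | succ n ih =>
    rcases eq_or_ne n 0 with rfl | hn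
    · simpa using hx
    · rw [pow_succ]
      exact T.mul_mem (ih hn) hx

variable {G : Type*} [Group G] (T : Subsemigroup G)

theorem inv_mem_of_isOfFinOrder {x : G} (hx : x ∈ T) (hfin : IsOfFinOrder x) : x⁻¹ ∈ T := by
  have hpos := hfin.orderOf_pos
  have : x⁻¹ = x ^ (2 * orderOf x - 1) := by
    refine inv_eq_of_mul_eq_one_left ?_
    rw [← pow_succ, Nat.sub_add_cancel (by omega), pow_mul', pow_orderOf_eq_one, one_pow]
  rw [this]
  exact T.pow_mem hx (by omega)

def toSubgroup (hT : ∀ x ∈ T, IsOfFinOrder x) (hne : (T : Set G).Nonempty) : Subgroup G :=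
  { T with
    one_mem' := by
      obtain ⟨x, hx⟩ := hne
      rw [← pow_orderOf_eq_one x]
      exact T.pow_mem hx (hT x hx).orderOf_pos.ne'
    inv_mem' := fun hx => T.inv_mem_of_isOfFinOrder hx (hT _ hx) }

end Subsemigroup

section ExponentTwo

variable {G : Type*} [Group G]

theorem commute_of_mul_self_eq_one {a b : G} (ha : a * a = 1) (hb : b * b = 1)
    (hab : a * b * (a * b) = 1) : Commute a b := by
  calc a * b = (a * b)⁻¹ := (inv_eq_of_mul_eq_one_left hab).symm
    _ = b * a := by rw [mul_inv_rev, inv_eq_of_mul_eq_one_left ha, inv_eq_of_mul_eq_one_left hb]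

theorem Subgroup.eq_top_of_compl_finite [Infinite G] {H : Subgroup G}
    (hH : (H : Set G)ᶜ.Finite) : H = ⊤ := by
  rw [Subgroup.eq_top_iff']
  intro g
  by_contra hg
  have hHinf : (H : Set G).Infinite := by simpa using hH.infinite_compl
  refine (hHinf.image (mul_right_injective g).injOn) (hH.subset ?_)
  rintro _ ⟨x, hx, rfl⟩ hgx
  exact hg (by simpa using H.mul_mem hgx (H.inv_mem hx))

/-- Involutions `a`, `b` with `a * b` an involution commute, so each involution is central (its
centralizer is cofinite), and every `g` is a product `a * (a * g)` of two involutions. -/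
theorem mul_self_eq_one_of_finite_setOf_mul_self_ne_one [Infinite G]
    (h : {g : G | g * g ≠ 1}.Finite) (g : G) : g * g = 1 := by
  have hcentral : ∀ a : G, a * a = 1 → ∀ x : G, Commute a x := by
    intro a ha x
    have htop : Subgroup.centralizer {a} = ⊤ := by
      refine Subgroup.eq_top_of_compl_finite
        ((h.union (h.preimage (mul_right_injective a).injOn)).subset fun y hy => ?_)
      by_contra hmem
      simp only [Set.mem_union, Set.mem_preimage, not_or] at hmem
      exact hy (Subgroup.mem_centralizer_singleton_iff.2
        (commute_of_mul_self_eq_one ha (not_not.1 hmem.1) (not_not.1 hmem.2)).eq.symm)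
    exact (Subgroup.mem_centralizer_singleton_iff.1 (htop ▸ Subgroup.mem_top x)).symm
  obtain ⟨a, ha⟩ := (h.union (h.preimage (mul_left_injective g).injOn)).infinite_compl.nonempty
  simp only [Set.mem_compl_iff, Set.mem_union, Set.mem_preimage, not_or] at ha
  obtain ⟨ha, hag⟩ := And.imp not_not.1 not_not.1 ha
  have hg : a * (a * g) = g := by rw [← mul_assoc, ha, one_mul]
  calc g * g = a * (a * g) * (a * (a * g)) := by rw [hg]
    _ = a * a * (a * g * (a * g)) := ((hcentral a ha (a * g)).mul_mul_mul_comm a (a * g)).symm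
    _ = 1 := by rw [ha, hag, one_mul]

end ExponentTwo

theorem exists_injective_linearMap_finsupp_nat (K V : Type*) [DivisionRing K] [Finite K]
    [AddCommGroup V] [Module K V] [Infinite V] :
    ∃ f : (ℕ →₀ K) →ₗ[K] V, Injective f := by
  let B := Module.Basis.ofVectorSpace K V
  have : Infinite (Module.Basis.ofVectorSpaceIndex K V) := by
    by_contra hfin
    rw [not_infinite_iff_finite] at hfin
    have := Module.Finite.of_basis B
    have := Module.finite_of_finite K (M := V)
    exact not_finite V
  let e := Infinite.natEmbedding (Module.Basis.ofVectorSpaceIndex K V)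
  exact ⟨Finsupp.linearCombination K (B ∘ e), B.linearIndependent.comp e e.injective⟩

theorem exists_injective_directSum_zmod_two_of_mul_self_eq_one {Γ : Type*} [Group Γ] [Infinite Γ]
    (h : ∀ g : Γ, g * g = 1) :
    ∃ f : Multiplicative (DirectSum ℕ fun _ => ZMod 2) →* Γ, Injective f := by
  let : CommGroup Γ :=
    { mul_comm a b := (commute_of_mul_self_eq_one (h a) (h b) (h (a * b))).eq }
  let : Module (ZMod 2) (Additive Γ) :=
    AddCommGroup.zmodModule fun x => by rw [two_nsmul]; exact h x.toMul
  obtain ⟨L, hL⟩ := exists_injective_linearMap_finsupp_nat (ZMod 2) (Additive Γ)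
  let e := (finsuppLEquivDirectSum (ZMod 2) (ZMod 2) ℕ).symm
  exact ⟨AddMonoidHom.toMultiplicativeLeft (L ∘ₗ e.toLinearMap).toAddMonoidHom,
    hL.comp e.injective⟩

section Commensurability

variable {G : Type*} [Group G]

def powCommensurable (G : Type*) [Group G] : Setoid G where
  r g h := ∃ a b : ℤ, a ≠ 0 ∧ b ≠ 0 ∧ g ^ a = h ^ b
  iseqv :=
    { refl _ := ⟨1, 1, one_ne_zero, one_ne_zero, rfl⟩
      symm := fun ⟨a, b, ha, hb, hab⟩ => ⟨b, a, hb, ha, hab.symm⟩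
      trans := fun ⟨a, b, ha, hb, hab⟩ ⟨c, d, hc, hd, hcd⟩ =>
        ⟨a * c, d * b, mul_ne_zero ha hc, mul_ne_zero hd hb, by
          rw [zpow_mul, hab, ← zpow_mul, mul_comm b c, zpow_mul, hcd, ← zpow_mul, mul_comm d b]⟩ }

theorem not_isOfFinOrder_of_powCommensurable {g h : G} (hgh : powCommensurable G g h)
    (hg : ¬IsOfFinOrder g) : ¬IsOfFinOrder h := by
  obtain ⟨a, b, ha, -, hab⟩ := hgh
  rw [isOfFinOrder_iff_zpow_eq_one] at hg ⊢
  rintro ⟨n, hn, hhn⟩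
  exact hg ⟨a * n, mul_ne_zero ha hn, by rw [zpow_mul, hab, ← zpow_mul, mul_comm, zpow_mul, hhn,
    one_zpow]⟩

noncomputable def powRep (g : G) : G := (Quotient.mk (powCommensurable G) g).out

theorem powCommensurable_powRep (g : G) : powCommensurable G g (powRep g) :=
  (powCommensurable G).symm' (Quotient.mk_out (s := powCommensurable G) g)

theorem powRep_eq_of_powCommensurable {g h : G} (hgh : powCommensurable G g h) :
    powRep g = powRep h :=
  congrArg Quotient.out (Quotient.sound hgh)

/-- `b / a` for chosen exponents with `g ^ a = powRep g ^ b`; for `g` of infinite order it does not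
depend on the choice (`powRatio_eq`). -/
noncomputable def powRatio (g : G) : ℚ :=
  let h := powCommensurable_powRep g
  (h.choose_spec.choose : ℚ) / h.choose

theorem powRatio_eq {g : G} (hg : ¬IsOfFinOrder g) {a b : ℤ} (ha : a ≠ 0)
    (hab : g ^ a = powRep g ^ b) : powRatio g = b / a := by
  have hrep := not_isOfFinOrder_of_powCommensurable (powCommensurable_powRep g) hg
  obtain ⟨ha', -, hab'⟩ := (powCommensurable_powRep g).choose_spec.choose_spec
  set a' := (powCommensurable_powRep g).choose
  set b' := (powCommensurable_powRep g).choose_spec.choose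
  have key : b * a' = b' * a := injective_zpow_iff_not_isOfFinOrder.2 hrep <| by
    simp only
    rw [zpow_mul, ← hab, ← zpow_mul, mul_comm, zpow_mul, hab', ← zpow_mul]
  rw [powRatio, div_eq_div_iff (by exact_mod_cast ha') (by exact_mod_cast ha)]
  exact_mod_cast key.symm

theorem powRatio_ne_zero {g : G} (hg : ¬IsOfFinOrder g) : powRatio g ≠ 0 := by
  obtain ⟨a, b, ha, hb, hab⟩ := powCommensurable_powRep g
  rw [powRatio_eq hg ha hab]
  exact div_ne_zero (by exact_mod_cast hb) (by exact_mod_cast ha)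

theorem powRatio_pow {g : G} (hg : ¬IsOfFinOrder g) {n : ℕ} (hn : n ≠ 0) :
    powRatio (g ^ n) = n * powRatio g := by
  obtain ⟨a, b, ha, -, hab⟩ := powCommensurable_powRep g
  have hrep : powRep (g ^ n) = powRep g :=
    powRep_eq_of_powCommensurable ⟨1, n, one_ne_zero, by exact_mod_cast hn, by simp⟩
  have habn : (g ^ n) ^ a = powRep (g ^ n) ^ (b * n) := by
    rw [hrep, ← zpow_natCast, ← zpow_mul, mul_comm, zpow_mul, hab, ← zpow_mul]
  rw [powRatio_eq (fun h => hg (h.of_pow hn)) ha habn, powRatio_eq hg ha hab]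
  push_cast
  ring

theorem padicValRat_powRatio_pow {g : G} (hg : ¬IsOfFinOrder g) {n : ℕ} (hn : n ≠ 0) :
    padicValRat 2 (powRatio (g ^ n)) = padicValNat 2 n + padicValRat 2 (powRatio g) := by
  rw [powRatio_pow hg hn, padicValRat.mul (by exact_mod_cast hn) (powRatio_ne_zero hg),
    padicValRat.of_nat]

end Commensurability

section Coloring

variable {G : Type*} [Group G]

open Classical in
noncomputable def separatingColoring (g : G) : Fin 2 :=
  if IsOfFinOrder g then if WellOrderingRel g g⁻¹ then 0 else 1
  else if Even (padicValRat 2 (powRatio g)) then 0 else 1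

theorem separatingColoring_of_not_isOfFinOrder {g : G} (hg : ¬IsOfFinOrder g) :
    separatingColoring g = if Even (padicValRat 2 (powRatio g)) then 0 else 1 := by
  classical
  rw [separatingColoring, if_neg hg]

theorem separatingColoring_sq_ne {g : G} (hg : ¬IsOfFinOrder g) :
    separatingColoring (g ^ 2) ≠ separatingColoring g := by
  have hg2 : ¬IsOfFinOrder (g ^ 2) := fun h => hg (h.of_pow two_ne_zero)
  rw [separatingColoring_of_not_isOfFinOrder hg, separatingColoring_of_not_isOfFinOrder hg2,
    padicValRat_powRatio_pow hg two_ne_zero, padicValNat_self]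
  by_cases h : Even (padicValRat 2 (powRatio g)) <;> simp [h, Int.even_add]

theorem separatingColoring_pow_four_pow {g : G} (hg : ¬IsOfFinOrder g) (j : ℕ) :
    separatingColoring (g ^ 4 ^ j) = separatingColoring g := by
  have hpos : 4 ^ j ≠ 0 := by positivity
  have h4 : padicValNat 2 (4 ^ j) = 2 * j := by
    rw [show 4 ^ j = 2 ^ (2 * j) by rw [pow_mul]; norm_num, padicValNat.prime_pow]
  rw [separatingColoring_of_not_isOfFinOrder hg,
    separatingColoring_of_not_isOfFinOrder (fun h => hg (h.of_pow hpos)),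
    padicValRat_powRatio_pow hg hpos, h4]
  simp [Int.even_add, parity_simps]

theorem separatingColoring_inv_ne {g : G} (hg : IsOfFinOrder g) (hne : g⁻¹ ≠ g) :
    separatingColoring g⁻¹ ≠ separatingColoring g := by
  classical
  rw [separatingColoring, separatingColoring, if_pos hg, if_pos hg.inv, inv_inv]
  rcases trichotomous_of WellOrderingRel g g⁻¹ with h | h | h
  · simp [h, asymm h]
  · exact absurd h.symm hne
  · simp [h, asymm h]

theorem Subsemigroup.infinite_setOf_separatingColoring_ne {T : Subsemigroup G} {x : G}
    (hx : x ∈ T) (hfin : ¬IsOfFinOrder x) (k : Fin 2) :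
    {y ∈ (T : Set G) | separatingColoring y ≠ k}.Infinite := by
  obtain ⟨y, hyT, hy, hyk⟩ : ∃ y ∈ T, ¬IsOfFinOrder y ∧ separatingColoring y ≠ k := by
    by_cases hxk : separatingColoring x = k
    · exact ⟨x ^ 2, T.pow_mem hx two_ne_zero, fun h => hfin (h.of_pow two_ne_zero),
        hxk ▸ separatingColoring_sq_ne hfin⟩
    · exact ⟨x, hx, hfin, hxk⟩
  refine Set.infinite_of_injective_forall_mem (f := fun j : ℕ => y ^ 4 ^ j)
    ((injective_pow_iff_not_isOfFinOrder.2 hy).comp (Nat.pow_right_injective (by norm_num)))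
    fun j => ⟨T.pow_mem hyT (by positivity), ?_⟩
  rwa [separatingColoring_pow_four_pow hy]

theorem Subgroup.finite_setOf_mul_self_ne_one {H : Subgroup G} (hH : ∀ x ∈ H, IsOfFinOrder x)
    {k : Fin 2} (hk : {x ∈ (H : Set G) | separatingColoring x ≠ k}.Finite) :
    {x ∈ (H : Set G) | x * x ≠ 1}.Finite := by
  refine (hk.union (hk.preimage inv_injective.injOn)).subset ?_
  rintro x ⟨hxH, hx⟩
  have hne := separatingColoring_inv_ne (hH x hxH) fun h => hx (mul_eq_one_iff_eq_inv.2 h.symm)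
  by_cases hxk : separatingColoring x = k
  · exact Or.inr ⟨H.inv_mem hxH, hxk ▸ hne⟩
  · exact Or.inl ⟨hxH, hxk⟩

end Coloring

/-- A group `G` satisfies: for each 2-coloring of `G` there is an infinite
almost-monochromatic subsemigroup of `G`, if and only if `G` contains a subgroup
isomorphic to `⊕ₙ ℤ/2`. -/
theorem almostMono_iff_directSum_zmod2 (G : Type*) [Group G] :
    (∀ c : G → Fin 2, ∃ T : Subsemigroup G, Infinite T ∧
      ∃ col : Fin 2, {x ∈ (T : Set G) | c x ≠ col}.Finite) ↔
    ∃ f : Multiplicative (DirectSum ℕ (fun _ => ZMod 2)) →* G,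
      Function.Injective f := by
  refine ⟨fun h => ?_, fun ⟨f, hf⟩ c => exists_infinite_almostMono_subsemigroup_of_injective hf c⟩
  obtain ⟨T, hT, k, hk⟩ := h separatingColoring
  have htors : ∀ x ∈ T, IsOfFinOrder x := fun x hx => by_contra fun hx' =>
    T.infinite_setOf_separatingColoring_ne hx hx' k hk
  let H := T.toSubgroup htors (Set.infinite_coe_iff.1 hT).nonempty
  have : Infinite H := hT
  have hH : {g : H | g * g ≠ 1}.Finite :=
    ((H.finite_setOf_mul_self_ne_one htors hk).preimage Subtype.val_injective.injOn).subset
      fun g hg => ⟨g.2, fun h => hg (Subtype.ext h)⟩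
  obtain ⟨f, hf⟩ := exists_injective_directSum_zmod_two_of_mul_self_eq_one
    (mul_self_eq_one_of_finite_setOf_mul_self_ne_one hH)
  exact ⟨H.subtype.comp f, Subtype.val_injective.comp hf⟩
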